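/- Consider the incidence structure with: points the fifteen lines of F₁₅; lines of type (i) the five lines of F₅; lines of type (ii) the ten lines of F₁₀ = {(ℓ + m)^⊥ : ℓ, m distinct elements of F₅}; where a point P is incident with a line ℓ of type (i) if and only if P ∩ ℓ^⊥ = 0, and incident with a line ℓ of type (ii) if and only if P ⊆ ℓ^⊥. Then this incidence structure is a generalized quadrangle of order (2,2): every line is incident with exactly 3 points, every point is incident with exactly 3 lines, two distinct points are incident with at most one common line, and for every non-incident point–line pair (P, L) there is exactly one point Q incident with L such that P and Q are incident with a common line. (Hence it is isomorphic to the generalized quadrangle W(2).) -/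

import Mathlib

/-!
The form `(x, y) ↦ xᵀ M₆ y` is alternating and nondegenerate, so `(ℓ + m)^⊥⊥ = ℓ + m`:
a point lies on the type (ii) line `(ℓ + m)^⊥` iff it is contained in `ℓ + m`. Both kinds of
incidence are therefore finite computations over GF(3); they identify the geometry with an
explicit incidence table on 15 points and 15 lines, on which the quadrangle axioms are checked
directly. The identification is a bijection because in a generalized quadrangle with `s, t ≥ 1`
distinct points lie on different sets of lines and distinct lines carry different sets of points.
-/

open Matrix

abbrev F3 := ZMod 3
abbrev V6 := Fin 6 → F3

/-- The line (2-dim subspace) represented by a 2×6 matrix: the span of its rows. -/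
def lineOf (A : Matrix (Fin 2) (Fin 6) F3) : Submodule F3 V6 :=
  Submodule.span F3 (Set.range A)

/-- The perp of a subspace `W` with respect to a 6×6 Gram matrix `M`:
`{x | xᵀ M w = 0 for all w ∈ W}`. -/
def perp (M : Matrix (Fin 6) (Fin 6) F3) (W : Submodule F3 V6) : Submodule F3 V6 where
  carrier := {x | ∀ w ∈ W, x ⬝ᵥ M.mulVec w = 0}
  add_mem' := by
    intro a b ha hb w hw
    simp only [Set.mem_setOf_eq] at *
    rw [add_dotProduct, ha w hw, hb w hw, add_zero]
  zero_mem' := by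
    intro w hw
    exact zero_dotProduct _
  smul_mem' := by
    intro c x hx w hw
    simp only [Set.mem_setOf_eq] at *
    rw [smul_dotProduct, hx w hw, smul_zero]

/-- A 2×6 matrix built from three 2×2 blocks. -/
def blk3 (A B C : Matrix (Fin 2) (Fin 2) F3) : Matrix (Fin 2) (Fin 6) F3 :=
  Matrix.of fun i j => ![A, B, C] ⟨(j : ℕ) / 2, by omega⟩ i ⟨(j : ℕ) % 2, by omega⟩

/-- A 6×6 matrix built from nine 2×2 blocks. -/
def blk33 (M : Matrix (Fin 3) (Fin 3) (Matrix (Fin 2) (Fin 2) F3)) :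
    Matrix (Fin 6) (Fin 6) F3 :=
  Matrix.of fun i j =>
    M ⟨(i : ℕ) / 2, by omega⟩ ⟨(j : ℕ) / 2, by omega⟩ ⟨(i : ℕ) % 2, by omega⟩ ⟨(j : ℕ) % 2, by omega⟩

/-- The 2×2 block of a 6×6 matrix in block-position `(i, j)`. -/
def blkAt (M : Matrix (Fin 6) (Fin 6) F3) (i j : Fin 3) : Matrix (Fin 2) (Fin 2) F3 :=
  Matrix.of fun a b => M ⟨2 * (i : ℕ) + (a : ℕ), by omega⟩ ⟨2 * (j : ℕ) + (b : ℕ), by omega⟩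

/-- Two (not necessarily distinct) lines are opposite w.r.t. `M` if `ℓ ∩ m^⊥ = 0`. -/
def Opp (M : Matrix (Fin 6) (Fin 6) F3) (ℓ m : Submodule F3 V6) : Prop :=
  ℓ ⊓ perp M m = ⊥

/-- The set `F5` of five lines: `F4` together with the line of `(I R S)` where
`R = [[2,0],[2,2]]` and `S = [[2,2],[0,2]]`. -/
def F5 : Set (Submodule F3 V6) :=
  {lineOf (blk3 1 0 0), lineOf (blk3 0 1 0), lineOf (blk3 0 0 1), lineOf (blk3 1 1 1),
   lineOf (blk3 1 !![2, 0; 2, 2] !![2, 2; 0, 2])}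

/-- The six lines `m₁, …, m₆`. -/
def mline : Fin 6 → Submodule F3 V6 :=
  ![lineOf !![1, 0, 1, 2, 2, 0; 0, 1, 1, 0, 2, 2],
    lineOf !![1, 0, 1, 2, 1, 1; 0, 1, 1, 0, 2, 0],
    lineOf !![1, 0, 0, 2, 0, 1; 0, 1, 1, 1, 2, 1],
    lineOf !![1, 0, 0, 2, 2, 0; 0, 1, 1, 1, 2, 2],
    lineOf !![1, 0, 2, 2, 1, 1; 0, 1, 0, 2, 2, 0],
    lineOf !![1, 0, 2, 2, 0, 1; 0, 1, 0, 2, 2, 1]]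

/-- The Gram matrix `M₆`. -/
def M6 : Matrix (Fin 6) (Fin 6) F3 :=
  !![0, 0, 2, 2, 0, 0;
     0, 0, 0, 0, 1, 1;
     1, 0, 0, 0, 0, 0;
     1, 0, 0, 0, 1, 0;
     0, 2, 0, 2, 0, 0;
     0, 2, 0, 0, 0, 0]

/-- The fifteen lines `F₁₅`. -/
def f15 : Fin 15 → Submodule F3 V6 :=
  ![lineOf !![1, 0, 2, 2, 2, 2; 0, 1, 0, 2, 0, 2],
    lineOf !![1, 0, 0, 0, 0, 1; 0, 1, 0, 0, 2, 1],
    lineOf !![1, 0, 1, 0, 2, 2; 0, 1, 0, 1, 0, 2],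
    lineOf !![0, 0, 1, 0, 1, 2; 0, 0, 0, 1, 1, 0],
    lineOf !![1, 0, 0, 2, 1, 0; 0, 1, 1, 1, 0, 1],
    lineOf !![0, 0, 1, 0, 1, 1; 0, 0, 0, 1, 2, 0],
    lineOf !![1, 0, 2, 0, 0, 0; 0, 1, 2, 2, 0, 0],
    lineOf !![1, 0, 1, 2, 0, 0; 0, 1, 1, 0, 0, 0],
    lineOf !![1, 0, 1, 0, 0, 0; 0, 1, 0, 1, 0, 0],
    lineOf !![1, 0, 2, 0, 2, 0; 0, 1, 2, 2, 2, 2],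
    lineOf !![1, 0, 0, 0, 1, 0; 0, 1, 0, 0, 0, 1],
    lineOf !![0, 0, 1, 0, 1, 0; 0, 0, 0, 1, 0, 1],
    lineOf !![1, 0, 0, 0, 2, 2; 0, 1, 0, 0, 0, 2],
    lineOf !![1, 0, 2, 0, 1, 0; 0, 1, 2, 2, 0, 1],
    lineOf !![1, 0, 1, 0, 1, 1; 0, 1, 0, 1, 2, 0]]

/-- The set `F₁₅` of fifteen lines (the point set of the geometry). -/
def F15 : Set (Submodule F3 V6) := Set.range f15

/-- `F₁₀`: the perps of the spans of the ten pairs of distinct elements of `F₅`. -/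
def F10 : Set (Submodule F3 V6) :=
  {W | ∃ ℓ ∈ F5, ∃ m ∈ F5, ℓ ≠ m ∧ W = perp M6 (ℓ ⊔ m)}

/-- Points of the incidence structure: the elements of `F₁₅`. -/
def Pt : Type := {x : Submodule F3 V6 // x ∈ F15}

/-- Lines of the incidence structure: type (i) the elements of `F₅`,
type (ii) the elements of `F₁₀`. -/
def Ln : Type := {x : Submodule F3 V6 // x ∈ F5} ⊕ {x : Submodule F3 V6 // x ∈ F10}

/-- Incidence: a point `P` is incident with a line `ℓ` of type (i) iff `P ∩ ℓ^⊥ = 0`,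
and with a line `ℓ` of type (ii) iff `P ⊆ ℓ^⊥`. -/
def inc (P : Pt) (L : Ln) : Prop :=
  match L with
  | .inl ℓ => P.1 ⊓ perp M6 ℓ.1 = ⊥
  | .inr ℓ => P.1 ≤ perp M6 ℓ.1

section Lines

variable {M : Matrix (Fin 6) (Fin 6) F3} {A B : Matrix (Fin 2) (Fin 6) F3} {x : V6}

theorem mem_lineOf : x ∈ lineOf A ↔ ∃ v, v ᵥ* A = x := by
  change x ∈ Submodule.span F3 (Set.range A.row) ↔ _
  rw [← range_vecMulLinear]
  rfl

theorem mem_lineOf_sup_lineOf :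
    x ∈ lineOf A ⊔ lineOf B ↔ ∃ v w, v ᵥ* A + w ᵥ* B = x := by
  simp only [Submodule.mem_sup, mem_lineOf, exists_exists_eq_and]

theorem lineOf_le_iff {W : Submodule F3 V6} : lineOf A ≤ W ↔ ∀ i, A i ∈ W := by
  rw [lineOf, Submodule.span_le]
  exact Set.range_subset_iff

theorem mem_perp_lineOf : x ∈ perp M (lineOf A) ↔ ∀ i, x ⬝ᵥ M *ᵥ A i = 0 := by
  refine ⟨fun h i => h _ (Submodule.subset_span ⟨i, rfl⟩), fun h w hw => ?_⟩
  obtain ⟨v, rfl⟩ := mem_lineOf.1 hw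
  simp only [vecMul_eq_sum, Matrix.mulVec_sum, dotProduct_sum, Matrix.mulVec_smul,
    dotProduct_smul, h, smul_zero, Finset.sum_const_zero]

theorem vecMul_mul_mul_transpose_apply (v : Fin 2 → F3) (i : Fin 2) :
    (v ᵥ* (A * M * Bᵀ)) i = (v ᵥ* A) ⬝ᵥ M *ᵥ B i := by
  rw [← vecMul_vecMul, vecMul_transpose, dotProduct_mulVec, vecMul_vecMul, mulVec,
    dotProduct_comm]

theorem lineOf_inf_perp_eq_bot_iff :
    lineOf A ⊓ perp M (lineOf B) = ⊥ ↔ ∀ v, v ᵥ* (A * M * Bᵀ) = 0 → v ᵥ* A = 0 := by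
  rw [Submodule.eq_bot_iff]
  constructor
  · intro h v hv
    refine h _ ⟨mem_lineOf.2 ⟨v, rfl⟩, mem_perp_lineOf.2 fun i => ?_⟩
    rw [← vecMul_mul_mul_transpose_apply, hv, Pi.zero_apply]
  · rintro h x ⟨hxA, hxB⟩
    obtain ⟨v, rfl⟩ := mem_lineOf.1 hxA
    refine h v (funext fun i => ?_)
    rw [vecMul_mul_mul_transpose_apply]
    exact mem_perp_lineOf.1 hxB i

theorem perp_eq_orthogonal (W : Submodule F3 V6) :
    perp M W = (Matrix.toBilin' Mᵀ).orthogonal W := by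
  ext x
  simp only [LinearMap.BilinForm.mem_orthogonal_iff, Matrix.toBilin'_apply', mulVec_transpose,
    dotProduct_comm _ (x ᵥ* M), ← dotProduct_mulVec]
  rfl

theorem perp_perp (hM : Mᵀ = -M) (hdet : M.det ≠ 0) (W : Submodule F3 V6) :
    perp M (perp M W) = W := by
  have hskew (u w : V6) : u ⬝ᵥ Mᵀ *ᵥ w = -(w ⬝ᵥ Mᵀ *ᵥ u) := by
    rw [dotProduct_mulVec, vecMul_transpose, dotProduct_comm, hM, neg_mulVec, dotProduct_neg,
      neg_neg]
  have hrefl : (Matrix.toBilin' Mᵀ).IsRefl := fun u w h => by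
    rw [Matrix.toBilin'_apply'] at h ⊢
    rw [hskew, h, neg_zero]
  rw [perp_eq_orthogonal, perp_eq_orthogonal]
  exact LinearMap.BilinForm.orthogonal_orthogonal
    (LinearMap.BilinForm.nondegenerate_toBilin'_iff_det_ne_zero.2 (by rwa [det_transpose]))
    hrefl W

end Lines

section GeneralizedQuadrangle

variable {P L P' L' : Type*} {s t : ℕ} {I : P → L → Prop}

structure IsGeneralizedQuadrangle (s t : ℕ) (I : P → L → Prop) : Prop where
  ncard_points_on : ∀ l, {p | I p l}.ncard = s + 1
  ncard_lines_through : ∀ p, {l | I p l}.ncard = t + 1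
  ncard_common_lines_le_one : ∀ p q, p ≠ q → {l | I p l ∧ I q l}.ncard ≤ 1
  existsUnique_collinear : ∀ p l, ¬ I p l → ∃! q, I q l ∧ ∃ l', I p l' ∧ I q l'

namespace IsGeneralizedQuadrangle

open Finset in
theorem of_card [Fintype P] [Fintype L] [DecidableRel I] (h₁ : ∀ l, #{p | I p l} = s + 1)
    (h₂ : ∀ p, #{l | I p l} = t + 1) (h₃ : ∀ p q, p ≠ q → #{l | I p l ∧ I q l} ≤ 1)
    (h₄ : ∀ p l, ¬ I p l → #{q | I q l ∧ ∃ l', I p l' ∧ I q l'} = 1) :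
    IsGeneralizedQuadrangle s t I := by
  refine ⟨fun l => ?_, fun p => ?_, fun p q hpq => ?_,
    fun p l hpl => (Fintype.existsUnique_iff_card_one _).2 (h₄ p l hpl)⟩ <;>
  simp only [← coe_filter_univ, Set.ncard_coe_finset]
  exacts [h₁ l, h₂ p, h₃ p q hpq]

theorem of_bijective {I' : P' → L' → Prop} {f : P → P'} {g : L → L'} (hf : f.Bijective)
    (hg : g.Bijective) (hI : ∀ p l, I' (f p) (g l) ↔ I p l)
    (h : IsGeneralizedQuadrangle s t I) : IsGeneralizedQuadrangle s t I' := by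
  have ncard_f (q : P' → Prop) : {x | q (f x)}.ncard = {y | q y}.ncard :=
    Set.ncard_preimage_of_injective_subset_range hf.1 (hf.2.range_eq ▸ Set.subset_univ _)
  have ncard_g (q : L' → Prop) : {x | q (g x)}.ncard = {y | q y}.ncard :=
    Set.ncard_preimage_of_injective_subset_range hg.1 (hg.2.range_eq ▸ Set.subset_univ _)
  refine ⟨hg.2.forall.2 fun l => ?_, hf.2.forall.2 fun p => ?_,
    hf.2.forall.2 fun p => hf.2.forall.2 fun q hpq => ?_,
    hf.2.forall.2 fun p => hg.2.forall.2 fun l hpl => ?_⟩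
  · rw [← ncard_f]
    simpa only [hI] using h.ncard_points_on l
  · rw [← ncard_g]
    simpa only [hI] using h.ncard_lines_through p
  · rw [← ncard_g]
    simpa only [hI] using h.ncard_common_lines_le_one p q (hf.1.ne_iff.1 hpq)
  · rw [hI] at hpl
    rw [hf.existsUnique_iff]
    simpa only [hg.2.exists, hI] using h.existsUnique_collinear p l hpl

theorem point_ext (h : IsGeneralizedQuadrangle s t I) (ht : t ≠ 0) {p q : P}
    (hpq : ∀ l, I p l ↔ I q l) : p = q := by
  by_contra hne
  have hcommon := h.ncard_common_lines_le_one p q hne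
  simp only [hpq, and_self, h.ncard_lines_through q] at hcommon
  omega

theorem line_ext (h : IsGeneralizedQuadrangle s t I) (hs : s ≠ 0) {l m : L}
    (hlm : ∀ p, I p l ↔ I p m) : l = m := by
  by_contra hne
  have hl := h.ncard_points_on l
  obtain ⟨p, q, hp, hq, hpq⟩ := (Set.one_lt_ncard_iff
    (Set.finite_of_ncard_ne_zero (s := {p | I p l}) (by omega))).1 (by omega)
  have hfin : {n | I p n ∧ I q n}.Finite :=
    (Set.finite_of_ncard_ne_zero (s := {n | I p n}) (by rw [h.ncard_lines_through p]; omega)).subset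
      fun n hn => hn.1
  have hsub : ({l, m} : Set L) ⊆ {n | I p n ∧ I q n} := by
    rintro n (rfl | rfl)
    exacts [⟨hp, hq⟩, ⟨(hlm p).1 hp, (hlm q).1 hq⟩]
  have h₂ := Set.ncard_le_ncard hsub hfin
  rw [Set.ncard_pair hne] at h₂
  have := h.ncard_common_lines_le_one p q hpq
  omega

end IsGeneralizedQuadrangle

end GeneralizedQuadrangle


theorem M6_transpose : M6ᵀ = -M6 := by decide

theorem M6_det_ne_zero : M6.det ≠ 0 :=
  det_ne_zero_of_right_inverse (B := !![0, 0, 1, 0, 0, 0; 0, 0, 0, 0, 0, 2; 2, 0, 0, 0, 1, 2;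
    0, 0, 0, 0, 2, 1; 0, 0, 2, 1, 0, 0; 0, 1, 1, 2, 0, 0]) (by decide)

def f5Matrix : Fin 5 → Matrix (Fin 2) (Fin 6) F3 :=
  ![blk3 1 0 0, blk3 0 1 0, blk3 0 0 1, blk3 1 1 1, blk3 1 !![2, 0; 2, 2] !![2, 2; 0, 2]]

theorem F5_eq_range : F5 = Set.range fun a => lineOf (f5Matrix a) := by
  ext
  simp [F5, Fin.exists_fin_succ, f5Matrix, eq_comm]

def f15Matrix : Fin 15 → Matrix (Fin 2) (Fin 6) F3 :=
  ![!![1, 0, 2, 2, 2, 2; 0, 1, 0, 2, 0, 2],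
    !![1, 0, 0, 0, 0, 1; 0, 1, 0, 0, 2, 1],
    !![1, 0, 1, 0, 2, 2; 0, 1, 0, 1, 0, 2],
    !![0, 0, 1, 0, 1, 2; 0, 0, 0, 1, 1, 0],
    !![1, 0, 0, 2, 1, 0; 0, 1, 1, 1, 0, 1],
    !![0, 0, 1, 0, 1, 1; 0, 0, 0, 1, 2, 0],
    !![1, 0, 2, 0, 0, 0; 0, 1, 2, 2, 0, 0],
    !![1, 0, 1, 2, 0, 0; 0, 1, 1, 0, 0, 0],
    !![1, 0, 1, 0, 0, 0; 0, 1, 0, 1, 0, 0],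
    !![1, 0, 2, 0, 2, 0; 0, 1, 2, 2, 2, 2],
    !![1, 0, 0, 0, 1, 0; 0, 1, 0, 0, 0, 1],
    !![0, 0, 1, 0, 1, 0; 0, 0, 0, 1, 0, 1],
    !![1, 0, 0, 0, 2, 2; 0, 1, 0, 0, 0, 2],
    !![1, 0, 2, 0, 1, 0; 0, 1, 2, 2, 0, 1],
    !![1, 0, 1, 0, 1, 1; 0, 1, 0, 1, 2, 0]]

theorem f15_eq_lineOf (i : Fin 15) : f15 i = lineOf (f15Matrix i) := by
  fin_cases i <;> rfl

def f10Pair : Fin 10 → Fin 5 × Fin 5 :=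
  ![(0, 1), (0, 2), (0, 3), (0, 4), (1, 2), (1, 3), (1, 4), (2, 3), (2, 4), (3, 4)]

theorem exists_f10Pair :
    ∀ a b : Fin 5, a ≠ b → ∃ k, f10Pair k = (a, b) ∨ f10Pair k = (b, a) := by
  decide

def pointsOn : Fin 5 ⊕ Fin 10 → Finset (Fin 15) :=
  Sum.elim ![{2, 3, 13}, {1, 9, 14}, {0, 4, 7}, {5, 6, 12}, {8, 10, 11}]
    ![{6, 7, 8}, {1, 10, 12}, {0, 9, 11}, {4, 5, 14}, {3, 5, 11}, {4, 10, 13}, {0, 2, 12},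
      {2, 8, 14}, {6, 9, 13}, {1, 3, 7}]

theorem isGeneralizedQuadrangle_pointsOn :
    IsGeneralizedQuadrangle 2 2 fun i L => i ∈ pointsOn L :=
  .of_card (by decide) (by decide) (by decide) (by decide)

theorem f15_inf_perp_eq_bot_iff (i : Fin 15) (a : Fin 5) :
    f15 i ⊓ perp M6 (lineOf (f5Matrix a)) = ⊥ ↔ i ∈ pointsOn (.inl a) := by
  rw [f15_eq_lineOf, lineOf_inf_perp_eq_bot_iff]
  revert i a
  decide

theorem f15_le_perp_perp_iff (i : Fin 15) (k : Fin 10) :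
    f15 i ≤
        perp M6 (perp M6 (lineOf (f5Matrix (f10Pair k).1) ⊔ lineOf (f5Matrix (f10Pair k).2))) ↔
      i ∈ pointsOn (.inr k) := by
  rw [perp_perp M6_transpose M6_det_ne_zero, f15_eq_lineOf, lineOf_le_iff]
  simp only [mem_lineOf_sup_lineOf]
  revert i k
  decide +kernel

theorem lineOf_f5Matrix_injective : Function.Injective fun a => lineOf (f5Matrix a) := by
  intro a b (h : lineOf (f5Matrix a) = lineOf (f5Matrix b))
  refine Sum.inl_injective (isGeneralizedQuadrangle_pointsOn.line_ext two_ne_zero fun i => ?_)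
  rw [← f15_inf_perp_eq_bot_iff, ← f15_inf_perp_eq_bot_iff, h]

def point (i : Fin 15) : Pt := ⟨f15 i, i, rfl⟩

def line : Fin 5 ⊕ Fin 10 → Ln :=
  Sum.map (fun a => ⟨lineOf (f5Matrix a), F5_eq_range ▸ ⟨a, rfl⟩⟩)
    (fun k => ⟨perp M6 (lineOf (f5Matrix (f10Pair k).1) ⊔ lineOf (f5Matrix (f10Pair k).2)),
      _, F5_eq_range ▸ ⟨_, rfl⟩, _, F5_eq_range ▸ ⟨_, rfl⟩,
      lineOf_f5Matrix_injective.ne (by revert k; decide), rfl⟩)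

theorem inc_point_line (i : Fin 15) (L : Fin 5 ⊕ Fin 10) :
    inc (point i) (line L) ↔ i ∈ pointsOn L :=
  match L with
  | .inl a => f15_inf_perp_eq_bot_iff i a
  | .inr k => f15_le_perp_perp_iff i k

theorem point_bijective : Function.Bijective point := by
  refine ⟨fun i j h => isGeneralizedQuadrangle_pointsOn.point_ext two_ne_zero fun L => ?_, ?_⟩
  · rw [← inc_point_line, ← inc_point_line, h]
  · rintro ⟨_, i, rfl⟩
    exact ⟨i, rfl⟩

theorem line_bijective : Function.Bijective line := by
  refine ⟨fun L L' h => isGeneralizedQuadrangle_pointsOn.line_ext two_ne_zero fun i => ?_, ?_⟩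
  · rw [← inc_point_line, ← inc_point_line, h]
  · rintro (⟨_, hℓ⟩ | ⟨_, ℓ, hℓ, m, hm, hne, rfl⟩)
    · rw [F5_eq_range] at hℓ
      obtain ⟨a, rfl⟩ := hℓ
      exact ⟨.inl a, rfl⟩
    · rw [F5_eq_range] at hℓ hm
      obtain ⟨a, rfl⟩ := hℓ
      obtain ⟨b, rfl⟩ := hm
      obtain ⟨k, hk⟩ := exists_f10Pair a b (ne_of_apply_ne (fun a => lineOf (f5Matrix a)) hne)
      refine ⟨.inr k, congrArg Sum.inr (Subtype.ext ?_)⟩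
      rcases hk with hk | hk
      · simp only [hk]
      · simp only [hk, sup_comm]

/-- The incidence structure with point set `F₁₅` and line set
`F₅ ∪ F₁₀` (with the incidence above) is a generalised quadrangle of order `(2,2)`:
every line has exactly 3 points, every point is on exactly 3 lines, two distinct points
lie on at most one common line, and for every non-incident point–line pair `(P, L)` there
is exactly one point on `L` collinear with `P`. -/
theorem stmt16 :
    (∀ L : Ln, {P : Pt | inc P L}.ncard = 3) ∧
    (∀ P : Pt, {L : Ln | inc P L}.ncard = 3) ∧
    (∀ P Q : Pt, P ≠ Q → {L : Ln | inc P L ∧ inc Q L}.ncard ≤ 1) ∧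
    (∀ (P : Pt) (L : Ln), ¬ inc P L →
      ∃! Q : Pt, inc Q L ∧ ∃ L' : Ln, inc P L' ∧ inc Q L') := by
  have h :=
    isGeneralizedQuadrangle_pointsOn.of_bijective point_bijective line_bijective inc_point_line
  exact ⟨h.ncard_points_on, h.ncard_lines_through, h.ncard_common_lines_le_one,
    h.existsUnique_collinear⟩
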